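/- The set {Sq^I(w_k) : I admissible with excess e(I) ≤ k} is linearly independent over Z/2 in the ideal (w_k) ⊂ Z/2[w_1, …, w_k] = H^*(BO(k); Z/2). -/

import Mathlib

/-!
Write `Sq^I (w_k) = w_k · x_I`: by the Cartan formula and `Sq^a (w_k) = w_a w_k`, `x_I` is
obtained from `1` by iterating the twisted squares `x ↦ ∑_a w_a Sq^{i-a} x`. Order monomials in
`w_1, …, w_k` by number of factors, ties broken reverse lexicographically from `w_k` down. If
`x_{I'}` has leading monomial `m` and `I = (i, I')` has excess `e`, then `x_I` has leading monomial
`w_e m²`: the terms with `a < e` vanish by instability, the term `a = e` is `w_e x_{I'}²` because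
the top square of a homogeneous element is its square, and a term with `a > e` has no more factors
than `w_e m²` but contains `w_a`, which lies above every variable of `w_e m²`. An admissible `I`
can be read off from `w_e m²` (its odd exponent gives `e`), so the `Sq^I (w_k)` have distinct
leading monomials.
-/

open MvPolynomial Finset

namespace Finsupp

variable {σ : Type*} [LinearOrder σ]

def GrevlexLt (f g : σ →₀ ℕ) : Prop :=
  f.degree < g.degree ∨ f.degree = g.degree ∧ ∃ q, g q < f q ∧ ∀ r, q < r → f r = g r

theorem grevlexLt_irrefl (f : σ →₀ ℕ) : ¬ GrevlexLt f f := by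
  rintro (h | ⟨-, q, hq, -⟩) <;> omega

theorem GrevlexLt.trans {f g h : σ →₀ ℕ} (hfg : GrevlexLt f g) (hgh : GrevlexLt g h) :
    GrevlexLt f h := by
  rcases hfg with hfg | ⟨hfg, q, hq, hfg'⟩
  · exact .inl (hfg.trans_le (hgh.elim le_of_lt fun h => h.1.le))
  rcases hgh with hgh | ⟨hgh, p, hp, hgh'⟩
  · exact .inl (hfg ▸ hgh)
  refine .inr ⟨hfg.trans hgh, max p q, ?_, fun r hr => ?_⟩
  · rcases lt_trichotomy p q with hpq | rfl | hpq
    · rw [max_eq_right hpq.le, ← hgh' q hpq]; exact hq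
    · simpa using hp.trans hq
    · rw [max_eq_left hpq.le, hfg' p hpq]; exact hp
  · exact (hfg' r (le_max_right p q |>.trans_lt hr)).trans (hgh' r (le_max_left p q |>.trans_lt hr))

theorem GrevlexLt.degree_le {f g : σ →₀ ℕ} (h : GrevlexLt f g) : f.degree ≤ g.degree :=
  h.elim le_of_lt fun h => h.1.le

theorem GrevlexLt.add_left {f g : σ →₀ ℕ} (h : GrevlexLt f g) (d : σ →₀ ℕ) :
    GrevlexLt (d + f) (d + g) := by
  simp only [GrevlexLt, map_add, coe_add, Pi.add_apply, add_lt_add_iff_left, add_right_inj] at h ⊢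
  exact h

theorem GrevlexLt.add_right {f g : σ →₀ ℕ} (h : GrevlexLt f g) (d : σ →₀ ℕ) :
    GrevlexLt (f + d) (g + d) := by
  simpa only [add_comm _ d] using h.add_left d

theorem grevlexLt_of_degree_le {f g : σ →₀ ℕ} {q : σ} (hdeg : g.degree ≤ f.degree)
    (hq : g q ≠ 0) (hf : ∀ r, q ≤ r → f r = 0) : GrevlexLt g f := by
  classical
  rcases hdeg.lt_or_eq with hlt | heq
  · exact .inl hlt
  have hqmem : q ∈ g.neLocus f := mem_neLocus.2 (by rw [hf q le_rfl]; exact hq)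
  have hne : (g.neLocus f).Nonempty := ⟨q, hqmem⟩
  set p := (g.neLocus f).max' hne
  have hqp : q ≤ p := (g.neLocus f).le_max' q hqmem
  refine .inr ⟨heq, p, ?_, fun r hr => ?_⟩
  · have := mem_neLocus.1 ((g.neLocus f).max'_mem hne)
    rw [hf p hqp] at this ⊢
    exact Nat.pos_of_ne_zero this
  · by_contra hne'
    exact (((g.neLocus f).le_max' r (mem_neLocus.2 hne')).trans_lt hr).false

theorem exists_forall_not_grevlexLt {ι : Type*} {s : Finset ι} (hs : s.Nonempty)
    (m : ι → σ →₀ ℕ) : ∃ i ∈ s, ∀ j ∈ s, ¬ GrevlexLt (m i) (m j) := by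
  let r : s → s → Prop := fun a b => GrevlexLt (m b) (m a)
  have : IsTrans s r := ⟨fun _ _ _ hab hbc => hbc.trans hab⟩
  have : Std.Irrefl r := ⟨fun _ => grevlexLt_irrefl _⟩
  obtain ⟨⟨i, hi⟩, -, hmax⟩ :=
    (Finite.wellFounded_of_trans_of_irrefl r).has_min Set.univ ⟨⟨_, hs.choose_spec⟩, trivial⟩
  exact ⟨i, hi, fun j hj => hmax ⟨j, hj⟩ trivial⟩

theorem single_one_add_two_nsmul_ne_zero {α : Type*} (q : α) (f : α →₀ ℕ) :
    single q 1 + 2 • f ≠ 0 := fun h => by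
  have := DFunLike.congr_fun h q
  simp at this

theorem single_one_add_two_nsmul_inj {α : Type*} {q q' : α} {f f' : α →₀ ℕ}
    (h : single q 1 + 2 • f = single q' 1 + 2 • f') : q = q' ∧ f = f' := by
  classical
  have hq : q = q' := by
    by_contra hne
    have := DFunLike.congr_fun h q
    simp [Ne.symm hne] at this
    omega
  subst hq
  refine ⟨rfl, Finsupp.ext fun r => ?_⟩
  have := DFunLike.congr_fun h r
  simp only [coe_add, coe_smul, Pi.add_apply, Pi.smul_apply, smul_eq_mul] at this
  omega

end Finsupp

namespace MvPolynomial

open Finsupp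

variable {σ R : Type*} [LinearOrder σ] [CommSemiring R]

def HasLeading (p : MvPolynomial σ R) (m : σ →₀ ℕ) : Prop :=
  p.coeff m = 1 ∧ ∀ v ∈ p.support, v = m ∨ GrevlexLt v m

theorem hasLeading_one : HasLeading (1 : MvPolynomial σ R) 0 := by
  classical
  refine ⟨coeff_zero_one, fun v hv => .inl ?_⟩
  by_contra h
  exact mem_support_iff.1 hv (by rw [coeff_one, if_neg (Ne.symm h)])

theorem hasLeading_X (i : σ) : HasLeading (X i : MvPolynomial σ R) (single i 1) := by
  classical
  refine ⟨coeff_X_same i, fun v hv => .inl ?_⟩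
  by_contra h
  exact mem_support_iff.1 hv (by rw [coeff_X, if_neg (Ne.symm h)])

variable {p q : MvPolynomial σ R} {m n : σ →₀ ℕ}

theorem HasLeading.totalDegree_le (hp : HasLeading p m) : p.totalDegree ≤ m.degree :=
  Finset.sup_le fun v hv => (hp.2 v hv).elim (fun h => h ▸ le_rfl) GrevlexLt.degree_le

theorem HasLeading.add_mem_support (hp : HasLeading p m) (hq : HasLeading q n) {a b : σ →₀ ℕ}
    (ha : a ∈ p.support) (hb : b ∈ q.support) :
    a = m ∧ b = n ∨ GrevlexLt (a + b) (m + n) := by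
  rcases hp.2 a ha with rfl | ha' <;> rcases hq.2 b hb with rfl | hb'
  · exact .inl ⟨rfl, rfl⟩
  · exact .inr (hb'.add_left a)
  · exact .inr (ha'.add_right b)
  · exact .inr ((ha'.add_right b).trans (hb'.add_left m))

theorem HasLeading.mul (hp : HasLeading p m) (hq : HasLeading q n) :
    HasLeading (p * q) (m + n) := by
  classical
  refine ⟨?_, fun v hv => ?_⟩
  · rw [coeff_mul, Finset.sum_eq_single_of_mem (m, n) (by simp), hp.1, hq.1, one_mul]
    rintro ⟨a, b⟩ hab hne
    by_contra h
    have hab : a + b = m + n := by simpa using hab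
    rcases hp.add_mem_support hq (mem_support_iff.2 (left_ne_zero_of_mul h))
      (mem_support_iff.2 (right_ne_zero_of_mul h)) with ⟨rfl, rfl⟩ | hlt
    · exact hne rfl
    · exact grevlexLt_irrefl _ (hab ▸ hlt)
  · obtain ⟨a, ha, b, hb, rfl⟩ := Finset.mem_add.1 (support_mul p q hv)
    rcases hp.add_mem_support hq ha hb with ⟨rfl, rfl⟩ | hlt
    · exact .inl rfl
    · exact .inr hlt

theorem hasLeading_sum {ι : Type*} {s : Finset ι} {f : ι → MvPolynomial σ R} {i₀ : ι}
    (hi₀ : i₀ ∈ s) (h₀ : HasLeading (f i₀) m)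
    (hlt : ∀ i ∈ s, i ≠ i₀ → ∀ v ∈ (f i).support, GrevlexLt v m) :
    HasLeading (∑ i ∈ s, f i) m := by
  classical
  have hrest : ∀ v ∈ (∑ i ∈ s.erase i₀, f i).support, GrevlexLt v m := fun v hv => by
    obtain ⟨i, hi, hv⟩ := Finset.mem_biUnion.1 (support_sum hv)
    exact hlt i (Finset.mem_of_mem_erase hi) (Finset.ne_of_mem_erase hi) v hv
  rw [← Finset.add_sum_erase s f hi₀]
  refine ⟨?_, fun v hv => ?_⟩
  · rw [coeff_add, h₀.1, notMem_support_iff.1 fun h => grevlexLt_irrefl m (hrest m h), add_zero]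
  · rcases Finset.mem_union.1 (support_add hv) with hv | hv
    · exact h₀.2 v hv
    · exact .inr (hrest v hv)

theorem linearIndependent_of_hasLeading {R : Type*} [CommRing R] {ι : Type*}
    {f : ι → MvPolynomial σ R} {lead : ι → σ →₀ ℕ} (hf : ∀ i, HasLeading (f i) (lead i))
    (hlead : Function.Injective lead) : LinearIndependent R f := by
  classical
  rw [linearIndependent_iff']
  intro s g hsum i hi
  by_contra hgi
  obtain ⟨i₀, hi₀, hmax⟩ :=
    exists_forall_not_grevlexLt ⟨i, Finset.mem_filter.2 ⟨hi, hgi⟩⟩ (s := s.filter (g · ≠ 0)) lead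
  obtain ⟨hi₀s, hgi₀⟩ := Finset.mem_filter.1 hi₀
  have hcoeff := congrArg (coeff (lead i₀)) hsum
  rw [coeff_sum, Finset.sum_eq_single_of_mem i₀ hi₀s, coeff_smul, (hf i₀).1, smul_eq_mul,
    mul_one, coeff_zero] at hcoeff
  · exact hgi₀ hcoeff
  · intro j hj hji₀
    rw [coeff_smul, smul_eq_mul]
    by_cases hgj : g j = 0
    · rw [hgj, zero_mul]
    by_contra hne
    rcases (hf j).2 _ (mem_support_iff.2 (right_ne_zero_of_mul hne)) with heq | hlt
    · exact hji₀ (hlead heq).symm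
    · exact hmax j (Finset.mem_filter.2 ⟨hj, hgj⟩) hlt

end MvPolynomial

open Finsupp

section

variable {k : ℕ}

def swWeight (k : ℕ) (i : Fin k) : ℕ := i + 1

structure SteenrodWu
    (Sq : ℕ → MvPolynomial (Fin k) (ZMod 2) →ₗ[ZMod 2] MvPolynomial (Fin k) (ZMod 2))
    (w : ℕ → MvPolynomial (Fin k) (ZMod 2)) : Prop where
  w_zero : w 0 = 1
  w_succ : ∀ i : Fin k, w ((i : ℕ) + 1) = X i
  w_of_lt : ∀ i, k < i → w i = 0
  sq_zero : ∀ x, Sq 0 x = x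
  sq_one : ∀ n, 0 < n → Sq n 1 = 0
  cartan : ∀ n x y, Sq n (x * y) = ∑ i ∈ range (n + 1), Sq i x * Sq (n - i) y
  wu : ∀ i j, i ≤ j → j ≤ k → Sq i (w j) =
    ∑ t ∈ range (i + 1), (Nat.choose (j + t - i - 1) t : ZMod 2) • (w (i - t) * w (j + t))
  unstable : ∀ i j, j < i → j ≤ k → Sq i (w j) = 0

structure IsUnstableOfDegree
    (Sq : ℕ → MvPolynomial (Fin k) (ZMod 2) →ₗ[ZMod 2] MvPolynomial (Fin k) (ZMod 2))
    (x : MvPolynomial (Fin k) (ZMod 2)) (d : ℕ) : Prop where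
  isWeightedHomogeneous : ∀ n, IsWeightedHomogeneous (swWeight k) (Sq n x) (d + n)
  eq_zero_of_lt : ∀ n, d < n → Sq n x = 0
  sq_self : Sq d x = x ^ 2
  totalDegree_le : ∀ n, (Sq n x).totalDegree ≤ 2 * x.totalDegree

namespace SteenrodWu

variable {Sq : ℕ → MvPolynomial (Fin k) (ZMod 2) →ₗ[ZMod 2] MvPolynomial (Fin k) (ZMod 2)}
  {w : ℕ → MvPolynomial (Fin k) (ZMod 2)} {x y : MvPolynomial (Fin k) (ZMod 2)} {a b d : ℕ}

theorem w_eq_X (H : SteenrodWu Sq w) (ha : 0 < a) (hak : a ≤ k) :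
    w a = X ⟨a - 1, by omega⟩ := by
  simpa [Nat.sub_add_cancel ha] using H.w_succ ⟨a - 1, by omega⟩

theorem isWeightedHomogeneous_w (H : SteenrodWu Sq w) (a : ℕ) :
    IsWeightedHomogeneous (swWeight k) (w a) a := by
  rcases Nat.eq_zero_or_pos a with rfl | ha
  · rw [H.w_zero]; exact isWeightedHomogeneous_one _ _
  rcases le_or_gt a k with hak | hak
  · rw [H.w_eq_X ha hak]
    convert isWeightedHomogeneous_X (ZMod 2) (swWeight k) _
    simp only [swWeight]; omega
  · rw [H.w_of_lt a hak]; exact isWeightedHomogeneous_zero _ _ _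

theorem totalDegree_w_le (H : SteenrodWu Sq w) (a : ℕ) : (w a).totalDegree ≤ 1 := by
  rcases Nat.eq_zero_or_pos a with rfl | ha
  · simp [H.w_zero]
  rcases le_or_gt a k with hak | hak
  · simp [H.w_eq_X ha hak]
  · simp [H.w_of_lt a hak]

theorem isUnstableOfDegree_one (H : SteenrodWu Sq w) : IsUnstableOfDegree Sq 1 0 where
  isWeightedHomogeneous n := by
    rcases Nat.eq_zero_or_pos n with rfl | hn
    · rw [H.sq_zero]; exact isWeightedHomogeneous_one _ _
    · rw [H.sq_one n hn]; exact isWeightedHomogeneous_zero _ _ _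
  eq_zero_of_lt := H.sq_one
  sq_self := by rw [H.sq_zero, one_pow]
  totalDegree_le n := by
    rcases Nat.eq_zero_or_pos n with rfl | hn
    · simp [H.sq_zero]
    · simp [H.sq_one n hn]

theorem isUnstableOfDegree_X (H : SteenrodWu Sq w) (j : Fin k) :
    IsUnstableOfDegree Sq (X j) (j + 1) where
  isWeightedHomogeneous n := by
    rw [← H.w_succ]
    rcases le_or_gt n (j + 1) with hn | hn
    · rw [H.wu n _ hn (by omega)]
      refine IsWeightedHomogeneous.sum _ _ _ fun t ht => ?_
      rw [smul_eq_C_mul]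
      convert ((H.isWeightedHomogeneous_w _).mul (H.isWeightedHomogeneous_w _)).C_mul _ using 1
      have := mem_range.1 ht
      omega
    · rw [H.unstable n _ hn (by omega)]; exact isWeightedHomogeneous_zero _ _ _
  eq_zero_of_lt n hn := by rw [← H.w_succ]; exact H.unstable n _ hn (by omega)
  sq_self := by
    rw [← H.w_succ, H.wu _ _ le_rfl (by omega), sum_eq_single_of_mem 0 (by simp)]
    · simp [sq]
    · intro t _ ht
      rw [Nat.choose_eq_zero_of_lt (by omega), Nat.cast_zero, zero_smul]
  totalDegree_le n := by
    rw [totalDegree_X, ← H.w_succ]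
    rcases le_or_gt n (j + 1) with hn | hn
    · rw [H.wu n _ hn (by omega)]
      refine (totalDegree_finsetSum _ _).trans (Finset.sup_le fun t _ => ?_)
      refine (totalDegree_smul_le _ _).trans ((totalDegree_mul _ _).trans ?_)
      linarith [H.totalDegree_w_le (n - t), H.totalDegree_w_le (j + 1 + t)]
    · simp [H.unstable n _ hn (by omega)]


theorem isUnstableOfDegree_mul (H : SteenrodWu Sq w) (hx : IsUnstableOfDegree Sq x a)
    (hy : IsUnstableOfDegree Sq y b) : IsUnstableOfDegree Sq (x * y) (a + b) where
  isWeightedHomogeneous n := by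
    rw [H.cartan]
    refine IsWeightedHomogeneous.sum _ _ _ fun i hi => ?_
    convert (hx.isWeightedHomogeneous i).mul (hy.isWeightedHomogeneous (n - i)) using 1
    have := mem_range.1 hi
    omega
  eq_zero_of_lt n hn := by
    rw [H.cartan]
    refine sum_eq_zero fun i _ => ?_
    rcases lt_or_ge a i with hai | hai
    · rw [hx.eq_zero_of_lt i hai, zero_mul]
    · rw [hy.eq_zero_of_lt (n - i) (by omega), mul_zero]
  sq_self := by
    rw [H.cartan, sum_eq_single_of_mem a (mem_range.2 (by omega)), add_tsub_cancel_left,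
      hx.sq_self, hy.sq_self, mul_pow]
    intro i _ hia
    rcases lt_or_gt_of_ne hia with hia | hia
    · rw [hy.eq_zero_of_lt _ (by omega), mul_zero]
    · rw [hx.eq_zero_of_lt i hia, zero_mul]
  totalDegree_le n := by
    rcases eq_or_ne x 0 with rfl | hx0
    · simp
    rcases eq_or_ne y 0 with rfl | hy0
    · simp
    rw [H.cartan, totalDegree_mul_of_isDomain hx0 hy0]
    refine (totalDegree_finsetSum _ _).trans (Finset.sup_le fun i _ => ?_)
    linarith [totalDegree_mul (Sq i x) (Sq (n - i) y), hx.totalDegree_le i,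
      hy.totalDegree_le (n - i)]

theorem isUnstableOfDegree_pow (H : SteenrodWu Sq w) (hx : IsUnstableOfDegree Sq x d) (n : ℕ) :
    IsUnstableOfDegree Sq (x ^ n) (n * d) := by
  induction n with
  | zero => simpa using H.isUnstableOfDegree_one
  | succ n ih => simpa [pow_succ, add_mul] using H.isUnstableOfDegree_mul ih hx

theorem isUnstableOfDegree_monomial (H : SteenrodWu Sq w) (f : Fin k →₀ ℕ) :
    IsUnstableOfDegree Sq (monomial f 1) (weight (swWeight k) f) := by
  induction f using Finsupp.induction with
  | zero => simpa using H.isUnstableOfDegree_one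
  | single_add j n f _ _ ih =>
    rw [monomial_single_add, map_add, weight_single, smul_eq_mul]
    exact H.isUnstableOfDegree_mul (H.isUnstableOfDegree_pow (H.isUnstableOfDegree_X j) n) ih

theorem isUnstableOfDegree (H : SteenrodWu Sq w)
    (hx : IsWeightedHomogeneous (swWeight k) x d) : IsUnstableOfDegree Sq x d := by
  have hsmul (f : Fin k →₀ ℕ) (r : ZMod 2) : monomial f r = r • monomial f 1 := by
    rw [smul_monomial, smul_eq_mul, mul_one]
  obtain ⟨hhom, hzero, hsq⟩ : (∀ n, IsWeightedHomogeneous (swWeight k) (Sq n x) (d + n)) ∧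
      (∀ n, d < n → Sq n x = 0) ∧ Sq d x = x ^ 2 := by
    induction hx using IsWeightedHomogeneous.induction_on with
    | zero => simp [isWeightedHomogeneous_zero]
    | add p q _ _ hp hq =>
      refine ⟨fun n => ?_, fun n hn => ?_, ?_⟩
      · rw [map_add]; exact (hp.1 n).add (hq.1 n)
      · rw [map_add, hp.2.1 n hn, hq.2.1 n hn, add_zero]
      · rw [map_add, hp.2.2, hq.2.2, add_pow_char]
    | monomial f r hf =>
      have hm := H.isUnstableOfDegree_monomial (Sq := Sq) f
      rw [hf] at hm
      refine ⟨fun n => ?_, fun n hn => ?_, ?_⟩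
      · rw [hsmul, map_smul, smul_eq_C_mul]; exact (hm.isWeightedHomogeneous n).C_mul r
      · rw [hsmul, map_smul, hm.eq_zero_of_lt n hn, smul_zero]
      · rw [hsmul, map_smul, hm.sq_self, smul_pow, ZMod.pow_card]
  refine ⟨hhom, hzero, hsq, fun n => ?_⟩
  conv_lhs => rw [as_sum x, map_sum]
  refine (totalDegree_finsetSum _ _).trans (Finset.sup_le fun v hv => ?_)
  rw [hsmul, map_smul]
  refine (totalDegree_smul_le _ _).trans ?_
  have := (H.isUnstableOfDegree_monomial v).totalDegree_le n
  rw [totalDegree_monomial _ one_ne_zero] at this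
  exact this.trans (Nat.mul_le_mul_left 2 (le_totalDegree hv))

end SteenrodWu

noncomputable def thomSq
    (Sq : ℕ → MvPolynomial (Fin k) (ZMod 2) →ₗ[ZMod 2] MvPolynomial (Fin k) (ZMod 2))
    (w : ℕ → MvPolynomial (Fin k) (ZMod 2)) (i : ℕ) (x : MvPolynomial (Fin k) (ZMod 2)) :
    MvPolynomial (Fin k) (ZMod 2) :=
  ∑ a ∈ range (i + 1), w a * Sq (i - a) x

namespace SteenrodWu

variable {Sq : ℕ → MvPolynomial (Fin k) (ZMod 2) →ₗ[ZMod 2] MvPolynomial (Fin k) (ZMod 2)}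
  {w : ℕ → MvPolynomial (Fin k) (ZMod 2)} {x : MvPolynomial (Fin k) (ZMod 2)} {d : ℕ}

theorem sq_w_top (H : SteenrodWu Sq w) (a : ℕ) : Sq a (w k) = w a * w k := by
  rcases le_or_gt a k with hak | hak
  · rw [H.wu a k hak le_rfl, sum_eq_single_of_mem 0 (by simp)]
    · simp
    · intro t _ ht
      rw [H.w_of_lt (k + t) (by omega), mul_zero, smul_zero]
  · rw [H.unstable a k hak le_rfl, H.w_of_lt a hak, zero_mul]

theorem sq_w_top_mul (H : SteenrodWu Sq w) (i : ℕ) (x : MvPolynomial (Fin k) (ZMod 2)) :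
    Sq i (w k * x) = w k * thomSq Sq w i x := by
  simp only [H.cartan, thomSq, Finset.mul_sum, H.sq_w_top]
  exact sum_congr rfl fun _ _ => by ring

theorem foldr_sq_w_top (H : SteenrodWu Sq w) (l : List ℕ) :
    l.foldr (fun s x => Sq s x) (w k) = w k * l.foldr (thomSq Sq w) 1 := by
  induction l with
  | nil => simp
  | cons i l ih => rw [List.foldr_cons, ih, H.sq_w_top_mul, List.foldr_cons]

theorem isWeightedHomogeneous_thomSq (H : SteenrodWu Sq w)
    (hx : IsWeightedHomogeneous (swWeight k) x d) (i : ℕ) :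
    IsWeightedHomogeneous (swWeight k) (thomSq Sq w i x) (d + i) := by
  refine IsWeightedHomogeneous.sum _ _ _ fun a ha => ?_
  convert (H.isWeightedHomogeneous_w a).mul ((H.isUnstableOfDegree hx).isWeightedHomogeneous _)
    using 1
  have := mem_range.1 ha
  omega

theorem isWeightedHomogeneous_foldr_thomSq (H : SteenrodWu Sq w) (l : List ℕ) :
    IsWeightedHomogeneous (swWeight k) (l.foldr (thomSq Sq w) 1) l.sum := by
  induction l with
  | nil => exact isWeightedHomogeneous_one _ _
  | cons i l ih => simpa [add_comm] using H.isWeightedHomogeneous_thomSq ih i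

end SteenrodWu

def IsAdmissible (l : List ℕ) : Prop :=
  (∀ x ∈ l, 0 < x) ∧ l.IsChain (fun a b => 2 * b ≤ a)

def excess : List ℕ → ℕ
  | [] => 0
  | i :: l => i - l.sum

namespace IsAdmissible

variable {i : ℕ} {l : List ℕ}

theorem of_cons (h : IsAdmissible (i :: l)) : IsAdmissible l :=
  ⟨fun x hx => h.1 x (List.mem_cons_of_mem i hx), h.2.tail⟩

theorem sum_lt (h : IsAdmissible (i :: l)) : l.sum < i := by
  induction l generalizing i with
  | nil => simpa using h.1 i (by simp)
  | cons b l ih =>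
    have := ih h.of_cons
    have := (List.isChain_cons_cons.1 h.2).1
    simp only [List.sum_cons]
    omega

theorem excess_le (h : IsAdmissible (i :: l)) : excess l ≤ excess (i :: l) := by
  match l, h with
  | [], _ => simp [excess]
  | b :: l, h =>
    have := h.of_cons.sum_lt
    have := (List.isChain_cons_cons.1 h.2).1
    simp only [excess, List.sum_cons]
    omega

end IsAdmissible

/-- The exponent of the leading monomial `w_{e(I)} · (leadMono I')²` of `Sq^I (w_k) / w_k`,
for `I = (i, I')` of excess `e(I)`. `Fin.ofNat` wraps around, so the index is meaningful only for
`1 ≤ e(I) ≤ k`. -/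
noncomputable def leadMono (k : ℕ) [NeZero k] : List ℕ → Fin k →₀ ℕ
  | [] => 0
  | i :: l => single (Fin.ofNat k (excess (i :: l) - 1)) 1 + 2 • leadMono k l

theorem val_ofNat_excess_sub_one [NeZero k] {l : List ℕ} (h : excess l ≤ k) :
    (Fin.ofNat k (excess l - 1) : ℕ) = excess l - 1 := by
  rw [Fin.val_ofNat, Nat.mod_eq_of_lt (by have := NeZero.pos k; omega)]

theorem leadMono_eq_zero_of_excess_le [NeZero k] {l : List ℕ} (hl : IsAdmissible l)
    (hk : excess l ≤ k) {r : Fin k} (hr : excess l ≤ r) : leadMono k l r = 0 := by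
  induction l with
  | nil => rfl
  | cons i l ih =>
    have hq := val_ofNat_excess_sub_one hk
    have hle := hl.excess_le
    have hpos : 0 < excess (i :: l) := Nat.sub_pos_of_lt hl.sum_lt
    have hne : Fin.ofNat k (excess (i :: l) - 1) ≠ r := fun h => by
      rw [← h] at hr; omega
    simp only [leadMono, Finsupp.add_apply, Finsupp.smul_apply, single_eq_of_ne' hne,
      ih hl.of_cons (hle.trans hk) (hle.trans hr), smul_zero, add_zero]

theorem leadMono_injOn [NeZero k] {l l' : List ℕ} (hl : IsAdmissible l) (hl' : IsAdmissible l')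
    (hk : excess l ≤ k) (hk' : excess l' ≤ k) (h : leadMono k l = leadMono k l') : l = l' := by
  induction l generalizing l' with
  | nil =>
    cases l' with
    | nil => rfl
    | cons => exact absurd h.symm (single_one_add_two_nsmul_ne_zero _ _)
  | cons i l ih =>
    cases l' with
    | nil => exact absurd h (single_one_add_two_nsmul_ne_zero _ _)
    | cons i' l' =>
      obtain ⟨hq, htail⟩ := single_one_add_two_nsmul_inj h
      have hq := congrArg Fin.val hq
      rw [val_ofNat_excess_sub_one hk, val_ofNat_excess_sub_one hk'] at hq
      obtain rfl := ih hl.of_cons hl'.of_cons (hl.excess_le.trans hk)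
        (hl'.excess_le.trans hk') htail
      have := hl.sum_lt
      have := hl'.sum_lt
      simp only [excess] at hq
      rw [show i = i' by omega]

namespace SteenrodWu

variable {Sq : ℕ → MvPolynomial (Fin k) (ZMod 2) →ₗ[ZMod 2] MvPolynomial (Fin k) (ZMod 2)}
  {w : ℕ → MvPolynomial (Fin k) (ZMod 2)} {x : MvPolynomial (Fin k) (ZMod 2)} {d : ℕ}

theorem grevlexLt_of_mem_support_w_mul (H : SteenrodWu Sq w)
    (hx : IsWeightedHomogeneous (swWeight k) x d) {m : Fin k →₀ ℕ} {a n : ℕ} (ha : 0 < a)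
    (hdeg : 2 * x.totalDegree + 1 ≤ m.degree) (hm : ∀ r : Fin k, a ≤ r + 1 → m r = 0)
    {v : Fin k →₀ ℕ} (hv : v ∈ (w a * Sq n x).support) : GrevlexLt v m := by
  rcases le_or_gt a k with hak | hak
  swap
  · simp [H.w_of_lt a hak] at hv
  rw [H.w_eq_X ha hak, support_X_mul] at hv
  obtain ⟨g, hg, rfl⟩ := Finset.mem_map.1 hv
  have hg' : g.degree ≤ (Sq n x).totalDegree := le_totalDegree hg
  have := (H.isUnstableOfDegree hx).totalDegree_le n
  refine grevlexLt_of_degree_le (q := ⟨a - 1, by omega⟩) ?_ (by simp) fun r hr => hm r ?_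
  · simp only [addLeftEmbedding_apply, map_add, degree_single]
    omega
  · change a - 1 ≤ (r : ℕ) at hr
    omega

theorem hasLeading_thomSq [NeZero k] (H : SteenrodWu Sq w)
    (hx : IsWeightedHomogeneous (swWeight k) x d) {M : Fin k →₀ ℕ} (hlead : HasLeading x M)
    {i : ℕ} (hdi : d < i) (hik : i - d ≤ k) (hM : ∀ r : Fin k, i - d ≤ r → M r = 0) :
    HasLeading (thomSq Sq w i x) (single (Fin.ofNat k (i - d - 1)) 1 + 2 • M) := by
  have hu := H.isUnstableOfDegree hx
  have hq : (Fin.ofNat k (i - d - 1) : ℕ) = i - d - 1 := by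
    rw [Fin.val_ofNat, Nat.mod_eq_of_lt (by omega)]
  refine hasLeading_sum (i₀ := i - d) (mem_range.2 (by omega)) ?_ fun a ha hne => ?_
  · rw [Nat.sub_sub_self hdi.le, hu.sq_self, sq, two_nsmul, H.w_eq_X (by omega) hik,
      show (⟨i - d - 1, _⟩ : Fin k) = Fin.ofNat k (i - d - 1) from Fin.ext hq.symm]
    exact (hasLeading_X _).mul (hlead.mul hlead)
  rcases lt_or_gt_of_ne hne with hlt | hgt
  · rw [hu.eq_zero_of_lt _ (by omega), mul_zero]
    simp
  intro v hv
  refine H.grevlexLt_of_mem_support_w_mul hx (by omega) ?_ (fun r hr => ?_) hv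
  · have := hlead.totalDegree_le
    simp only [map_add, map_nsmul, degree_single, smul_eq_mul]
    omega
  · have hne' : Fin.ofNat k (i - d - 1) ≠ r := fun h => by rw [← h] at hr; omega
    rw [Finsupp.add_apply, Finsupp.smul_apply, single_eq_of_ne' hne', hM r (by omega),
      smul_zero, add_zero]

theorem hasLeading_foldr_thomSq [NeZero k] (H : SteenrodWu Sq w) {l : List ℕ}
    (hl : IsAdmissible l) (hk : excess l ≤ k) :
    HasLeading (l.foldr (thomSq Sq w) 1) (leadMono k l) := by
  induction l with
  | nil => exact hasLeading_one
  | cons i l ih =>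
    have hle := hl.excess_le
    exact H.hasLeading_thomSq (H.isWeightedHomogeneous_foldr_thomSq l)
      (ih hl.of_cons (hle.trans hk)) hl.sum_lt hk
      fun r hr => leadMono_eq_zero_of_excess_le hl.of_cons (hle.trans hk) (hle.trans hr)

theorem linearIndependent_foldr_sq [NeZero k] (H : SteenrodWu Sq w) {p : List ℕ → Prop}
    (hp : ∀ l, p l → IsAdmissible l ∧ excess l ≤ k) :
    LinearIndependent (ZMod 2) fun I : Subtype p => I.1.foldr (fun s x => Sq s x) (w k) := by
  have hli : LinearIndependent (ZMod 2) fun I : Subtype p => I.1.foldr (thomSq Sq w) 1 :=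
    linearIndependent_of_hasLeading
      (fun I => H.hasLeading_foldr_thomSq (hp I.1 I.2).1 (hp I.1 I.2).2)
      fun I J h => Subtype.ext <|
        leadMono_injOn (hp I.1 I.2).1 (hp J.1 J.2).1 (hp I.1 I.2).2 (hp J.1 J.2).2 h
  have hwk : w k ≠ 0 := by
    rw [H.w_eq_X (NeZero.pos k) le_rfl]
    exact X_ne_zero _
  have := hli.map_injOn (LinearMap.mulLeft (ZMod 2) (w k)) (mul_right_injective₀ hwk).injOn
  simpa only [Function.comp_def, LinearMap.mulLeft_apply, ← H.foldr_sq_w_top] using this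

end SteenrodWu

end

theorem peterson_wu_linear_independence {k : ℕ} (hk : 0 < k)
    (Sq : ℕ → MvPolynomial (Fin k) (ZMod 2) →ₗ[ZMod 2] MvPolynomial (Fin k) (ZMod 2))
    (w : ℕ → MvPolynomial (Fin k) (ZMod 2))
    (hw0 : w 0 = 1)
    (hwX : ∀ i : Fin k, w ((i : ℕ) + 1) = MvPolynomial.X i)
    (hwTop : ∀ i, k < i → w i = 0)
    (hSq0 : ∀ x, Sq 0 x = x)
    (hSqOne : ∀ n, 0 < n → Sq n 1 = 0)
    (hCartan : ∀ n x y, Sq n (x * y) = ∑ i ∈ Finset.range (n + 1), Sq i x * Sq (n - i) y)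
    (hWu : ∀ i j, i ≤ j → j ≤ k → Sq i (w j) =
      ∑ t ∈ Finset.range (i + 1),
        (Nat.choose (j + t - i - 1) t : ZMod 2) • (w (i - t) * w (j + t)))
    (hInst : ∀ i j, j < i → j ≤ k → Sq i (w j) = 0) :
    LinearIndependent (ZMod 2)
      (fun I : {l : List ℕ // (∀ x ∈ l, 0 < x) ∧ l.Chain' (fun a b => 2 * b ≤ a) ∧
          l.headI ≤ k + l.tail.sum} =>
        I.1.foldr (fun s x => Sq s x) (w k)) := by
  have : NeZero k := ⟨hk.ne'⟩
  refine SteenrodWu.linearIndependent_foldr_sq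
    ⟨hw0, hwX, hwTop, hSq0, hSqOne, hCartan, hWu, hInst⟩ fun l hl => ⟨⟨hl.1, hl.2.1⟩, ?_⟩
  cases l <;> simp only [excess, List.headI_cons, List.tail_cons] at hl ⊢ <;> omega
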